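/- arXiv:1109.6427 — 4 statements merged into one kernel-verified Lean document; each statement's English description precedes it below -/
import Mathlib

section
/- Let 𝔉 be a field, m a positive integer, and ĝ a finite-dimensional perfect ℤ/mℤ-graded Lie algebra over 𝔉. Let 𝔏 = ⊕_{i=1}^∞ g_{i mod m} ⊗ t^i be the associated twisted loop algebra, and for a positive integer D let 𝔏^D be the direct sum of D copies of 𝔏. Then there exists a constant C, depending only on ĝ (with its grading), such that for every positive integer D and every 𝔉-Lie subalgebra 𝔥 of 𝔏^D of finite codimension, codim_{𝔏^D}[𝔥,𝔥] ≤ C·(codim_{𝔏^D}𝔥 + D). -/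
/-!
For `x ∈ g_k` with `k ≥ 1`, the map `p ↦ tᵏ p(tᵐ) ⊗ x` sends `𝔉[t]` into `𝔏` and turns products
into brackets: `⁅tᵏ p(tᵐ) ⊗ x, tˡ q(tᵐ) ⊗ y⁆ = tᵏ⁺ˡ (p q)(tᵐ) ⊗ ⁅x, y⁆`. Pulling `𝔥` back along
its coordinatewise version gives a subspace of `𝔉[t]ᴰ` of codimension at most `codim 𝔥`. In `𝔉[t]`
one has `codim (U V) ≤ codim U + codim V` (divide by a monic element of `U` of degree at most
`codim U`), and this passes to `𝔉[t]ᴰ` coordinate by coordinate. Since `ĝ` is perfect, each `g_c`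
is spanned by brackets of homogeneous basis vectors; so, up to a complement of dimension
`O(codim 𝔥)`, every `tⁱ ⊗ g_c` of degree `i ≥ 4m` lies in `[𝔥, 𝔥]`, while the degrees `i < 4m`
contribute at most `4m · D · dim ĝ`.
-/

open TensorProduct Polynomial

universe u v

namespace TwistedLoop

variable {F : Type*} [Field F]

section Codim

variable {M : Type u} {N : Type v} [AddCommGroup M] [Module F M] [AddCommGroup N] [Module F N]

noncomputable def codim (U : Submodule F M) : Cardinal := Module.rank F (M ⧸ U)

theorem codim_anti {U V : Submodule F M} (h : U ≤ V) : codim V ≤ codim U :=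
  LinearMap.rank_le_of_surjective _ (Submodule.factor_surjective h)

@[simp] theorem codim_top : codim (⊤ : Submodule F M) = 0 := by
  simp [codim]

theorem codim_inf_le (U V : Submodule F M) : codim (U ⊓ V) ≤ codim U + codim V := by
  have hker : LinearMap.ker (U.mkQ.prod V.mkQ) = U ⊓ V := by
    rw [LinearMap.ker_prod, Submodule.ker_mkQ, Submodule.ker_mkQ]
  calc codim (U ⊓ V) ≤ Module.rank F ((M ⧸ U) × (M ⧸ V)) :=
        LinearMap.rank_le_of_injective _ <| LinearMap.ker_eq_bot.mp <|
          Submodule.ker_liftQ_eq_bot' _ _ hker.symm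
    _ = codim U + codim V := rank_prod'

theorem codim_iInf_le {ι : Type*} [Fintype ι] (U : ι → Submodule F M) :
    codim (⨅ i, U i) ≤ ∑ i, codim (U i) := by
  classical
  rw [← Finset.inf_univ_eq_iInf]
  induction (Finset.univ : Finset ι) using Finset.induction_on with
  | empty => simp
  | insert a s ha ih =>
    rw [Finset.inf_insert, Finset.sum_insert ha]
    exact (codim_inf_le _ _).trans (add_le_add le_rfl ih)

theorem rank_iSup_le {ι : Type*} [Fintype ι] (U : ι → Submodule F M) :
    Module.rank F ↥(⨆ i, U i) ≤ ∑ i, Module.rank F (U i) := by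
  classical
  rw [← Finset.sup_univ_eq_iSup]
  induction (Finset.univ : Finset ι) using Finset.induction_on with
  | empty => simp
  | insert a s ha ih =>
    rw [Finset.sup_insert, Finset.sum_insert ha]
    exact (Submodule.rank_add_le_rank_add_rank _ _).trans (add_le_add le_rfl ih)

theorem rank_map_mkQ_le_of_le_sup {T U S : Submodule F M} (h : T ≤ U ⊔ S) :
    Module.rank F (T.map U.mkQ) ≤ Module.rank F S :=
  calc Module.rank F (T.map U.mkQ) ≤ Module.rank F (S.map U.mkQ) := by
        refine Submodule.rank_mono ((Submodule.map_mono h).trans ?_)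
        rw [Submodule.map_sup, Submodule.mkQ_map_self, bot_sup_eq]
    _ ≤ Module.rank F S := rank_map_le _ _

theorem codim_le_rank_of_sup_eq_top {U S : Submodule F M} (h : U ⊔ S = ⊤) :
    codim U ≤ Module.rank F S := by
  have := rank_map_mkQ_le_of_le_sup h.ge
  rwa [Submodule.map_top, Submodule.range_mkQ, rank_top] at this

theorem exists_sup_eq_top_rank_eq_codim (U : Submodule F M) :
    ∃ S : Submodule F M, U ⊔ S = ⊤ ∧ Module.rank F S = codim U := by
  obtain ⟨S, hS⟩ := Submodule.exists_isCompl U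
  exact ⟨S, hS.sup_eq_top, (Submodule.quotientEquivOfIsCompl U S hS).rank_eq.symm⟩

theorem codim_map_linearEquiv {M' : Type u} [AddCommGroup M'] [Module F M'] (e : M ≃ₗ[F] M')
    (U : Submodule F M) : codim (U.map (e : M →ₗ[F] M')) = codim U :=
  (Submodule.Quotient.equiv U _ e rfl).rank_eq.symm

theorem codim_comap_le {f : N →ₗ[F] M} {U T : Submodule F M} (hf : LinearMap.range f ≤ T)
    {n : ℕ} (h : Module.rank F (T.map U.mkQ) ≤ n) : codim (U.comap f) ≤ n := by
  have hker : LinearMap.ker (U.mkQ ∘ₗ f) = U.comap f := by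
    rw [LinearMap.ker_comp, Submodule.ker_mkQ]
  have hrange : Module.rank F (LinearMap.range (U.mkQ ∘ₗ f)) ≤ n := by
    refine le_trans (Submodule.rank_mono ?_) h
    rw [LinearMap.range_comp]
    exact Submodule.map_mono hf
  have := ((Submodule.quotEquivOfEq _ _ hker).symm.trans
    (U.mkQ ∘ₗ f).quotKerEquivRange).lift_rank_eq
  rw [← Cardinal.lift_le.{u}, codim, this, Cardinal.lift_natCast]
  exact Cardinal.lift_le.mpr hrange |>.trans_eq (Cardinal.lift_natCast n)

theorem rank_range_le {f : N →ₗ[F] M} {n : ℕ} (h : Module.rank F N ≤ n) :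
    Module.rank F (LinearMap.range f) ≤ n := by
  have := (lift_rank_range_le f).trans (Cardinal.lift_le.{u}.mpr h)
  rwa [Cardinal.lift_natCast, ← Cardinal.lift_natCast.{v}, Cardinal.lift_le] at this

theorem rank_iSup_range_le {ι : Type*} [Fintype ι] (f : ι → N →ₗ[F] M) {n : ℕ}
    (h : Module.rank F N ≤ n) :
    Module.rank F ↥(⨆ i, LinearMap.range (f i)) ≤ Fintype.card ι * n := by
  refine (rank_iSup_le _).trans ?_
  simpa using Finset.sum_le_sum fun i (_ : i ∈ Finset.univ) => rank_range_le (f := f i) h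

end Codim

theorem codim_eq_codim_map_fst_add_codim_comap_inr {M N : Type u} [AddCommGroup M] [Module F M]
    [AddCommGroup N] [Module F N] (U : Submodule F (M × N)) :
    codim U = codim (U.map (LinearMap.fst F M N)) + codim (U.comap (LinearMap.inr F M N)) := by
  set Φ := U.mapQ _ (LinearMap.fst F M N) (Submodule.le_comap_map _ _)
  set Ψ := (U.comap (LinearMap.inr F M N)).mapQ U (LinearMap.inr F M N) le_rfl
  have hrange : LinearMap.range Φ = ⊤ := by
    rw [Submodule.range_mapQ, LinearMap.range_eq_top.mpr LinearMap.fst_surjective,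
      Submodule.map_top, Submodule.range_mkQ]
  have hker : LinearMap.ker Φ = LinearMap.range Ψ := by
    rw [Submodule.ker_mapQ, Submodule.range_mapQ, Submodule.comap_map_eq, LinearMap.ker_fst,
      Submodule.map_sup, Submodule.mkQ_map_self, bot_sup_eq]
  have hinj : Function.Injective Ψ := by
    rw [← LinearMap.ker_eq_bot, Submodule.ker_mapQ, Submodule.mkQ_map_self]
  rw [codim, ← LinearMap.rank_range_add_rank_ker Φ, hrange, rank_top, hker,
    rank_range_of_injective Ψ hinj]
  rfl

section CodimMul

variable (F) in
def CodimMulSubadditive (A : Type*) [Ring A] [Algebra F A] : Prop :=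
  ∀ U V : Submodule F A, codim (U * V) ≤ codim U + codim V

variable {A B : Type u} [Ring A] [Algebra F A] [Ring B] [Algebra F B]

theorem CodimMulSubadditive.of_algEquiv (h : CodimMulSubadditive F A) (e : A ≃ₐ[F] B) :
    CodimMulSubadditive F B := by
  intro U V
  let f : B ≃ₗ[F] A := e.symm.toLinearEquiv
  have hmul : (U * V).map (f : B →ₗ[F] A) = U.map (f : B →ₗ[F] A) * V.map (f : B →ₗ[F] A) :=
    Submodule.map_mul U V e.symm.toAlgHom
  have := h (U.map (f : B →ₗ[F] A)) (V.map (f : B →ₗ[F] A))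
  rwa [← hmul, codim_map_linearEquiv, codim_map_linearEquiv, codim_map_linearEquiv] at this

theorem CodimMulSubadditive.prod (hA : CodimMulSubadditive F A) (hB : CodimMulSubadditive F B) :
    CodimMulSubadditive F (A × B) := by
  intro U V
  have hmap : (U * V).map (LinearMap.fst F A B) =
      U.map (LinearMap.fst F A B) * V.map (LinearMap.fst F A B) :=
    Submodule.map_mul U V (AlgHom.fst F A B)
  have hcomap : U.comap (LinearMap.inr F A B) * V.map (LinearMap.snd F A B) ≤
      (U * V).comap (LinearMap.inr F A B) := by
    refine Submodule.mul_le.mpr fun u hu _ ⟨⟨a, b⟩, hab, hb⟩ => ?_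
    subst hb
    simpa using Submodule.mul_mem_mul (show ((0 : A), u) ∈ U from hu) hab
  have hV : codim (V.map (LinearMap.snd F A B)) ≤ codim (V.comap (LinearMap.inr F A B)) :=
    codim_anti fun b hb => ⟨_, hb, rfl⟩
  rw [codim_eq_codim_map_fst_add_codim_comap_inr (U * V),
    codim_eq_codim_map_fst_add_codim_comap_inr U, codim_eq_codim_map_fst_add_codim_comap_inr V,
    hmap, add_add_add_comm]
  exact add_le_add (hA _ _) ((codim_anti hcomap).trans ((hB _ _).trans (add_le_add le_rfl hV)))

theorem CodimMulSubadditive.pi_fin (h : CodimMulSubadditive F A) :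
    ∀ D : ℕ, CodimMulSubadditive F (Fin D → A)
  | 0 => fun U V => by simp [Subsingleton.elim (U * V) ⊤]
  | D + 1 =>
    ((h.pi_fin D).prod (h.of_algEquiv (AlgEquiv.funUnique F (Fin 1) A).symm)).of_algEquiv
      ((AlgEquiv.sumArrowEquivProdArrow _ _ F A).symm.trans
        (AlgEquiv.piCongrLeft F (fun _ => A) finSumFinEquiv))

end CodimMul

section Polynomial

theorem exists_monic_mem_natDegree_le {U : Submodule F F[X]} {n : ℕ} (hU : codim U ≤ n) :
    ∃ q ∈ U, q.Monic ∧ q.natDegree ≤ n := by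
  have hmeet : ¬ Disjoint (degreeLT F (n + 1)) U := by
    intro hdisj
    have hinj : Function.Injective (U.mkQ ∘ₗ (degreeLT F (n + 1)).subtype) := by
      rw [← LinearMap.ker_eq_bot, LinearMap.ker_comp, Submodule.ker_mkQ,
        ← Submodule.disjoint_iff_comap_eq_bot]
      exact hdisj
    have := (LinearMap.rank_le_of_injective _ hinj).trans hU
    rw [(degreeLTEquiv F (n + 1)).rank_eq, rank_fin_fun, Nat.cast_le] at this
    omega
  rw [Submodule.disjoint_def] at hmeet
  push Not at hmeet
  obtain ⟨p, hpdeg, hpU, hp0⟩ := hmeet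
  refine ⟨p * C p.leadingCoeff⁻¹, ?_, monic_mul_leadingCoeff_inv hp0, ?_⟩
  · rw [mul_comm, ← smul_eq_C_mul]
    exact U.smul_mem _ hpU
  · rw [natDegree_mul_leadingCoeff_inv _ hp0]
    rw [mem_degreeLT] at hpdeg
    exact Nat.lt_succ_iff.mp ((natDegree_lt_iff_degree_lt hp0).mpr (by exact_mod_cast hpdeg))

theorem codimMulSubadditive_polynomial : CodimMulSubadditive F F[X] := by
  intro U V
  rcases lt_or_ge (codim U) Cardinal.aleph0 with hU | hU
  · obtain ⟨n, hn⟩ := Cardinal.lt_aleph0.mp hU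
    obtain ⟨q, hqU, hq, hqdeg⟩ := exists_monic_mem_natDegree_le hn.le
    obtain ⟨S, hVS, hS⟩ := exists_sup_eq_top_rank_eq_codim V
    -- division with remainder by `q`: `f = q * (v + s) + (f %ₘ q)` with `v ∈ V`, `s ∈ S`
    have hcover : U * V ⊔ (S.map (LinearMap.mulLeft F q) ⊔ degreeLT F q.natDegree) = ⊤ := by
      refine eq_top_iff.mpr fun f _ => ?_
      obtain ⟨v, hv, s, hs, hvs⟩ :=
        Submodule.mem_sup.mp (hVS.ge (Submodule.mem_top (x := f /ₘ q)))
      have hf : f = q * v + (q * s + f %ₘ q) := by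
        rw [← add_assoc, ← mul_add, hvs, add_comm, modByMonic_add_div f q]
      rw [hf]
      refine Submodule.add_mem_sup (Submodule.mul_mem_mul hqU hv)
        (Submodule.add_mem_sup ⟨s, hs, rfl⟩ ?_)
      rw [mem_degreeLT, ← degree_eq_natDegree hq.ne_zero]
      exact degree_modByMonic_lt f hq
    calc codim (U * V)
        ≤ Module.rank F ↥(S.map (LinearMap.mulLeft F q) ⊔ degreeLT F q.natDegree) :=
          codim_le_rank_of_sup_eq_top hcover
      _ ≤ Module.rank F S + q.natDegree := by
          refine (Submodule.rank_add_le_rank_add_rank _ _).trans (add_le_add (rank_map_le _ _) ?_)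
          rw [(degreeLTEquiv F q.natDegree).rank_eq, rank_fin_fun]
      _ ≤ codim U + codim V := by
          rw [hS, add_comm, hn]
          exact add_le_add (by exact_mod_cast hqdeg) le_rfl
  · calc codim (U * V) ≤ Module.rank F F[X] := rank_quotient_le _
      _ = Cardinal.aleph0 := by
          simpa using (basisMonomials F).mk_eq_rank.symm
      _ ≤ codim U + codim V := hU.trans le_self_add

theorem codim_iInf_mul_le {D : ℕ} {ι : Type*} [Fintype ι]
    (U V : ι → Submodule F (Fin D → F[X])) {n : ℕ} (hU : ∀ i, codim (U i) ≤ n)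
    (hV : ∀ i, codim (V i) ≤ n) :
    codim (⨅ i, U i * V i) ≤ ((Fintype.card ι * (n + n) : ℕ) : Cardinal) := by
  have hUV (i : ι) : codim (U i * V i) ≤ n + n :=
    (codimMulSubadditive_polynomial.pi_fin D (U i) (V i)).trans (add_le_add (hU i) (hV i))
  refine (codim_iInf_le _).trans ((Finset.sum_le_sum fun i _ => hUV i).trans_eq ?_)
  simp only [Finset.sum_const, Finset.card_univ, nsmul_eq_mul, Nat.cast_mul, Nat.cast_add]

end Polynomial

theorem le_span_image_of_span_eq_top {ι M P : Type*} [DecidableEq ι] [AddCommGroup M]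
    [Module F M] {gr : ι → Submodule F M} (hgr : DirectSum.IsInternal gr) {z : P → M}
    {deg : P → ι} (hz : ∀ p, z p ∈ gr (deg p)) (hspan : Submodule.span F (Set.range z) = ⊤)
    (c : ι) : gr c ≤ Submodule.span F (z '' {p | deg p = c}) := by
  set A := Submodule.span F (z '' {p | deg p = c})
  set B := Submodule.span F (z '' {p | deg p = c}ᶜ)
  have hA : A ≤ gr c := Submodule.span_le.mpr <| by
    rintro _ ⟨p, hp, rfl⟩
    exact hp ▸ hz p
  have hB : B ≤ ⨆ j ≠ c, gr j := Submodule.span_le.mpr <| by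
    rintro _ ⟨p, hp, rfl⟩
    exact Submodule.mem_iSup_of_mem (deg p) (Submodule.mem_iSup_of_mem hp (hz p))
  have hAB : A ⊔ B = ⊤ := by
    rw [← Submodule.span_union, Set.image_union_image_compl_eq_range, hspan]
  refine le_of_eq ?_
  calc gr c = (A ⊔ B) ⊓ gr c := by rw [hAB, top_inf_eq]
    _ = A ⊔ B ⊓ gr c := sup_inf_assoc_of_le B hA
    _ = A := by rw [((hgr.submodule_iSupIndep c).symm.mono_left hB).eq_bot, sup_bot_eq]

section Loop

variable {g : Type*} [LieRing g] [LieAlgebra F g]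

theorem span_range_lie_basis_eq_top {κ : Type*} (b : Module.Basis κ F g)
    (hperf : Submodule.span F {z : g | ∃ x y : g, z = ⁅x, y⁆} = ⊤) :
    Submodule.span F (Set.range fun p : κ × κ => ⁅b p.1, b p.2⁆) = ⊤ := by
  let bracket : g →ₗ[F] g →ₗ[F] g :=
    LinearMap.mk₂ F (⁅·, ·⁆) add_lie smul_lie lie_add lie_smul
  rw [eq_top_iff, ← hperf, Submodule.span_le]
  rintro _ ⟨x, y, rfl⟩
  have := Submodule.apply_mem_map₂ bracket (b.mem_span x) (b.mem_span y)
  rw [Submodule.map₂_span_span] at this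
  refine Submodule.span_mono ?_ this
  rintro _ ⟨_, ⟨s, rfl⟩, _, ⟨t, rfl⟩, rfl⟩
  exact ⟨(s, t), rfl⟩

noncomputable def loopMap (m k : ℕ) (x : g) : F[X] →ₗ[F] F[X] ⊗[F] g :=
  (TensorProduct.mk F F[X] g).flip x ∘ₗ LinearMap.mulLeft F (X ^ k) ∘ₗ
    (aeval (X ^ m : F[X])).toLinearMap

theorem loopMap_apply (m k : ℕ) (x : g) (p : F[X]) :
    loopMap m k x p = (X ^ k * aeval (X ^ m : F[X]) p) ⊗ₜ x := rfl

theorem loopMap_X_pow (m k : ℕ) (x : g) (r : ℕ) :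
    loopMap m k x (X ^ r) = (X ^ (k + m * r) : F[X]) ⊗ₜ x := by
  rw [loopMap_apply, map_pow, aeval_X, ← pow_mul, ← pow_add]

theorem lie_loopMap (m k l : ℕ) (x y : g) (p q : F[X]) :
    ⁅loopMap m k x p, loopMap m l y q⁆ = loopMap m (k + l) ⁅x, y⁆ (p * q) := by
  rw [loopMap_apply, loopMap_apply, loopMap_apply, LieAlgebra.ExtendScalars.bracket_tmul,
    map_mul, pow_add]
  ring_nf

section Twisted

variable {m : ℕ} (gr : ZMod m → Submodule F g)

noncomputable def twistedLoop : Submodule F (F[X] ⊗[F] g) :=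
  Submodule.span F {z | ∃ i : ℕ, 1 ≤ i ∧ ∃ x ∈ gr (i : ZMod m), z = (X ^ i : F[X]) ⊗ₜ[F] x}

theorem loopMap_mem_twistedLoop {k : ℕ} (hk : 1 ≤ k) {x : g} (hx : x ∈ gr k) (p : F[X]) :
    loopMap m k x p ∈ twistedLoop gr := by
  suffices ⊤ ≤ (twistedLoop gr).comap (loopMap m k x) from this Submodule.mem_top
  rw [← (basisMonomials F).span_eq, Submodule.span_le]
  rintro _ ⟨r, rfl⟩
  refine Submodule.subset_span ⟨k + m * r, by omega, x, by simpa using hx, ?_⟩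
  simp only [coe_basisMonomials, monomial_one_right_eq_X_pow, loopMap_X_pow]

theorem range_compLeft_loopMap_le {k : ℕ} (hk : 1 ≤ k) {x : g} (hx : x ∈ gr k) (D : ℕ) :
    LinearMap.range ((loopMap m k x).compLeft (Fin D)) ≤
      Submodule.pi Set.univ fun _ => twistedLoop gr := by
  rintro _ ⟨a, rfl⟩ j -
  exact loopMap_mem_twistedLoop gr hk hx (a j)

end Twisted

noncomputable def derived {D : ℕ} (𝔥 : Submodule F (Fin D → F[X] ⊗[F] g)) :
    Submodule F (Fin D → F[X] ⊗[F] g) :=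
  Submodule.span F {z | ∃ x ∈ 𝔥, ∃ y ∈ 𝔥, z = fun i => ⁅x i, y i⁆}

variable {m D : ℕ} (𝔥 : Submodule F (Fin D → F[X] ⊗[F] g))

theorem map_mul_comap_le_derived (k l : ℕ) (x y : g) :
    (𝔥.comap ((loopMap m k x).compLeft (Fin D)) * 𝔥.comap ((loopMap m l y).compLeft (Fin D))).map
      ((loopMap m (k + l) ⁅x, y⁆).compLeft (Fin D)) ≤ derived 𝔥 := by
  rw [Submodule.map_le_iff_le_comap, Submodule.mul_le]
  exact fun u hu v hv =>
    Submodule.subset_span ⟨_, hu, _, hv, funext fun i => (lie_loopMap ..).symm⟩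

theorem single_X_pow_tmul_lie_mem {k l : ℕ} {x y : g} {W S : Submodule F (Fin D → F[X])}
    (hW : W ≤ 𝔥.comap ((loopMap m k x).compLeft (Fin D)) *
      𝔥.comap ((loopMap m l y).compLeft (Fin D)))
    (hWS : W ⊔ S = ⊤) (j : Fin D) (r : ℕ) :
    Pi.single j ((X ^ (k + l + m * r) : F[X]) ⊗ₜ[F] ⁅x, y⁆) ∈
      derived 𝔥 ⊔ LinearMap.range ((loopMap m (k + l) ⁅x, y⁆).compLeft (Fin D) ∘ₗ S.subtype) := by
  have hsingle : Pi.single j ((X ^ (k + l + m * r) : F[X]) ⊗ₜ[F] ⁅x, y⁆) =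
      (loopMap m (k + l) ⁅x, y⁆).compLeft (Fin D) (Pi.single j (X ^ r)) := by
    ext i
    rw [← loopMap_X_pow]
    exact (Pi.apply_single (fun _ => loopMap m (k + l) ⁅x, y⁆) (fun _ => map_zero _) j _ i).symm
  obtain ⟨w, hw, s, hs, hws⟩ :=
    Submodule.mem_sup.mp (hWS.ge (Submodule.mem_top (x := Pi.single j (X ^ r))))
  rw [hsingle, ← hws, map_add]
  exact Submodule.add_mem_sup
    (map_mul_comap_le_derived 𝔥 k l x y (Submodule.mem_map_of_mem (hW hw))) ⟨⟨s, hs⟩, rfl⟩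

end Loop

-- Shifted by `m` so as to be positive: `𝔏` starts in degree `1`.
def posRep {m : ℕ} (c : ZMod m) : ℕ := c.val + m

section PosRep

variable {m : ℕ} [NeZero m]

theorem one_le_posRep (c : ZMod m) : 1 ≤ posRep c := by
  have := NeZero.pos m
  unfold posRep
  omega

theorem posRep_lt (c : ZMod m) : posRep c < 2 * m := by
  have := ZMod.val_lt c
  unfold posRep
  omega

@[simp] theorem natCast_posRep (c : ZMod m) : (posRep c : ZMod m) = c := by
  simp [posRep]

end PosRep

theorem exists_eq_add_mul_of_natCast_eq {m a b : ℕ} (h : (a : ZMod m) = b) (hab : a ≤ b) :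
    ∃ r, b = a + m * r := by
  obtain ⟨r, hr⟩ := (Nat.modEq_iff_dvd' hab).mp ((ZMod.natCast_eq_natCast_iff _ _ _).mp h)
  exact ⟨r, by omega⟩

section Estimate

open Module

variable {g : Type*} [LieRing g] [LieAlgebra F g] {m : ℕ} {κ : Type*}
  (b : Basis κ F g) (deg : κ → ZMod m) {D : ℕ}

noncomputable def derivedCoeffs (𝔥 : Submodule F (Fin D → F[X] ⊗[F] g)) :
    Submodule F (Fin D → F[X]) :=
  ⨅ p : κ × κ, 𝔥.comap ((loopMap m (posRep (deg p.1)) (b p.1)).compLeft (Fin D)) *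
    𝔥.comap ((loopMap m (posRep (deg p.2)) (b p.2)).compLeft (Fin D))

-- Every `posRep (deg s) + posRep (deg t)` is below `4 * m`.
variable (F g m D) in
noncomputable def lowDegreePart : Submodule F (Fin D → F[X] ⊗[F] g) :=
  ⨆ q : Fin (4 * m) × Fin D, LinearMap.range
    (LinearMap.single F (fun _ => F[X] ⊗[F] g) q.2 ∘ₗ TensorProduct.mk F F[X] g (X ^ (q.1 : ℕ)))

noncomputable def highDegreePart (S : Submodule F (Fin D → F[X])) :
    Submodule F (Fin D → F[X] ⊗[F] g) :=
  ⨆ p : κ × κ, LinearMap.range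
    ((loopMap m (posRep (deg p.1) + posRep (deg p.2)) ⁅b p.1, b p.2⁆).compLeft (Fin D) ∘ₗ S.subtype)

theorem rank_lowDegreePart_le [FiniteDimensional F g] :
    Module.rank F (lowDegreePart F g m D) ≤ ((4 * m * D * finrank F g : ℕ) : Cardinal) := by
  refine (rank_iSup_range_le _ (finrank_eq_rank F g).ge).trans_eq ?_
  simp only [Fintype.card_prod, Fintype.card_fin, Nat.cast_mul]

theorem rank_highDegreePart_le [Fintype κ] {S : Submodule F (Fin D → F[X])} {n : ℕ}
    (hS : Module.rank F S ≤ n) :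
    Module.rank F (highDegreePart b deg S) ≤ ((Fintype.card κ ^ 2 * n : ℕ) : Cardinal) := by
  refine (rank_iSup_range_le _ hS).trans_eq ?_
  simp only [Fintype.card_prod, sq, Nat.cast_mul]

variable [NeZero m] {gr : ZMod m → Submodule F g} (𝔥 : Submodule F (Fin D → F[X] ⊗[F] g))

theorem codim_derivedCoeffs_le [Fintype κ] (hb : ∀ s, b s ∈ gr (deg s)) {n : ℕ}
    (hn : Module.rank F ((Submodule.pi Set.univ fun _ => twistedLoop gr).map 𝔥.mkQ) ≤ n) :
    codim (derivedCoeffs b deg 𝔥) ≤ ((Fintype.card κ ^ 2 * (n + n) : ℕ) : Cardinal) := by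
  have hcodim (s : κ) : codim (𝔥.comap ((loopMap m (posRep (deg s)) (b s)).compLeft (Fin D))) ≤ n :=
    codim_comap_le (range_compLeft_loopMap_le gr (one_le_posRep _) (by simpa using hb s) D) hn
  have := codim_iInf_mul_le _ _ (fun p : κ × κ => hcodim p.1) (fun p => hcodim p.2)
  rwa [Fintype.card_prod, ← sq] at this

theorem pi_twistedLoop_le_sup (hdec : DirectSum.IsInternal gr)
    (hbr : ∀ i j : ZMod m, ∀ x ∈ gr i, ∀ y ∈ gr j, ⁅x, y⁆ ∈ gr (i + j))
    (hperf : Submodule.span F {z : g | ∃ x y : g, z = ⁅x, y⁆} = ⊤)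
    (hb : ∀ s, b s ∈ gr (deg s)) {S : Submodule F (Fin D → F[X])}
    (hS : derivedCoeffs b deg 𝔥 ⊔ S = ⊤) :
    (Submodule.pi Set.univ fun _ => twistedLoop gr) ≤
      derived 𝔥 ⊔ (lowDegreePart F g m D ⊔ highDegreePart b deg S) := by
  classical
  rw [← Submodule.iSup_map_single]
  refine iSup_le fun j => Submodule.map_le_iff_le_comap.mpr (Submodule.span_le.mpr ?_)
  rintro _ ⟨i, -, v, hv, rfl⟩
  rcases lt_or_ge i (4 * m) with hi | hi
  · exact Submodule.mem_sup_right (Submodule.mem_sup_left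
      (Submodule.mem_iSup_of_mem (⟨i, hi⟩, j) ⟨v, rfl⟩))
  have hgr := le_span_image_of_span_eq_top hdec (z := fun p : κ × κ => ⁅b p.1, b p.2⁆)
    (deg := fun p => deg p.1 + deg p.2) (fun p => hbr _ _ _ (hb p.1) _ (hb p.2))
    (span_range_lie_basis_eq_top b hperf) (i : ZMod m)
  suffices gr (i : ZMod m) ≤ (derived 𝔥 ⊔ (lowDegreePart F g m D ⊔ highDegreePart b deg S)).comap
      (LinearMap.single F (fun _ => F[X] ⊗[F] g) j ∘ₗ TensorProduct.mk F F[X] g (X ^ i))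
    from this hv
  refine hgr.trans (Submodule.span_le.mpr ?_)
  rintro _ ⟨p, hp, rfl⟩
  obtain ⟨r, rfl⟩ := exists_eq_add_mul_of_natCast_eq (m := m)
    (a := posRep (deg p.1) + posRep (deg p.2)) (b := i)
    (by rw [Nat.cast_add, natCast_posRep, natCast_posRep]; exact hp)
    (by linarith [posRep_lt (deg p.1), posRep_lt (deg p.2)])
  have hhigh := le_iSup (fun p : κ × κ => LinearMap.range
    ((loopMap m (posRep (deg p.1) + posRep (deg p.2)) ⁅b p.1, b p.2⁆).compLeft (Fin D) ∘ₗ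
      S.subtype)) p
  exact sup_le_sup_left (hhigh.trans le_sup_right) _
    (single_X_pow_tmul_lie_mem 𝔥 (iInf_le _ p) hS j r)

theorem rank_map_mkQ_derived_le [FiniteDimensional F g] [Fintype κ] (hdec : DirectSum.IsInternal gr)
    (hbr : ∀ i j : ZMod m, ∀ x ∈ gr i, ∀ y ∈ gr j, ⁅x, y⁆ ∈ gr (i + j))
    (hperf : Submodule.span F {z : g | ∃ x y : g, z = ⁅x, y⁆} = ⊤)
    (hb : ∀ s, b s ∈ gr (deg s)) {n : ℕ}
    (hn : Module.rank F ((Submodule.pi Set.univ fun _ => twistedLoop gr).map 𝔥.mkQ) ≤ n) :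
    Module.rank F ((Submodule.pi Set.univ fun _ => twistedLoop gr).map (derived 𝔥).mkQ) ≤
      ((4 * m * D * finrank F g + Fintype.card κ ^ 2 * (Fintype.card κ ^ 2 * (n + n)) : ℕ) :
        Cardinal) := by
  obtain ⟨S, hWS, hS⟩ := exists_sup_eq_top_rank_eq_codim (derivedCoeffs b deg 𝔥)
  calc _ ≤ Module.rank F ↥(lowDegreePart F g m D ⊔ highDegreePart b deg S) :=
        rank_map_mkQ_le_of_le_sup (pi_twistedLoop_le_sup b deg 𝔥 hdec hbr hperf hb hWS)
    _ ≤ Module.rank F (lowDegreePart F g m D) + Module.rank F (highDegreePart b deg S) :=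
        Submodule.rank_add_le_rank_add_rank _ _
    _ ≤ _ := add_le_add rank_lowDegreePart_le
          (rank_highDegreePart_le b deg (hS.trans_le (codim_derivedCoeffs_le b deg 𝔥 hb hn)))
    _ = _ := by push_cast; rfl

end Estimate

end TwistedLoop

open TwistedLoop in
/-- Let `ĝ = ⊕_{i ∈ ℤ/mℤ} gr i` be a finite-dimensional perfect `ℤ/mℤ`-graded Lie algebra
over a field `𝔉`, and let `𝔏 = ⊕_{i ≥ 1} g_{i mod m} ⊗ tⁱ ⊆ 𝔉[t] ⊗ ĝ` be the associated
twisted loop algebra.  Then there is a constant `C` depending only on `ĝ` (with its grading)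
such that for every `D ≥ 1` and every `𝔉`-Lie subalgebra `𝔥` of `𝔏ᴰ` of finite codimension,
`codim_{𝔏ᴰ} [𝔥, 𝔥] ≤ C · (codim_{𝔏ᴰ} 𝔥 + D)`.  (Here, for a subspace `S ≤ 𝔏ᴰ`, the
codimension `codim_{𝔏ᴰ} S` is expressed as the rank of the image of `𝔏ᴰ` in the quotient of
the ambient space by `S`.) -/
theorem stmt_0 (𝔉 : Type*) [Field 𝔉] (m : ℕ) (hm : 0 < m)
    (g : Type*) [LieRing g] [LieAlgebra 𝔉 g] [FiniteDimensional 𝔉 g]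
    (gr : ZMod m → Submodule 𝔉 g)
    (hdec : DirectSum.IsInternal gr)
    (hbr : ∀ i j : ZMod m, ∀ x ∈ gr i, ∀ y ∈ gr j, ⁅x, y⁆ ∈ gr (i + j))
    (hperf : Submodule.span 𝔉 {z : g | ∃ x y : g, z = ⁅x, y⁆} = ⊤) :
    let 𝔏 : Submodule 𝔉 (Polynomial 𝔉 ⊗[𝔉] g) :=
      Submodule.span 𝔉 {z : Polynomial 𝔉 ⊗[𝔉] g |
        ∃ i : ℕ, 1 ≤ i ∧ ∃ x ∈ gr (i : ZMod m), z = (Polynomial.X ^ i) ⊗ₜ[𝔉] x}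
    ∃ C : ℕ, ∀ D : ℕ, 0 < D →
      ∀ 𝔥 : Submodule 𝔉 (Fin D → Polynomial 𝔉 ⊗[𝔉] g),
        let LD : Submodule 𝔉 (Fin D → Polynomial 𝔉 ⊗[𝔉] g) :=
          Submodule.pi Set.univ fun _ => 𝔏
        let dh : Submodule 𝔉 (Fin D → Polynomial 𝔉 ⊗[𝔉] g) :=
          Submodule.span 𝔉 {z : Fin D → Polynomial 𝔉 ⊗[𝔉] g |
            ∃ x ∈ 𝔥, ∃ y ∈ 𝔥, z = fun i => ⁅x i, y i⁆}
        𝔥 ≤ LD →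
        (∀ x ∈ 𝔥, ∀ y ∈ 𝔥, (fun i => ⁅x i, y i⁆) ∈ 𝔥) →
        Module.rank 𝔉 ↥(LD.map 𝔥.mkQ) < Cardinal.aleph0 →
        Module.rank 𝔉 ↥(LD.map dh.mkQ) ≤
          (C : Cardinal) * (Module.rank 𝔉 ↥(LD.map 𝔥.mkQ) + (D : Cardinal)) := by
  intro 𝔏
  have : NeZero m := ⟨hm.ne'⟩
  let b := hdec.collectedBasis fun i => Module.finBasis 𝔉 (gr i)
  set N := Fintype.card (Σ i, Fin (Module.finrank 𝔉 (gr i)))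
  set d := Module.finrank 𝔉 g
  refine ⟨4 * m * d + 2 * N ^ 4, ?_⟩
  intro D _ 𝔥 LD dh _ _ hfin
  obtain ⟨n, hn⟩ := Cardinal.lt_aleph0.mp hfin
  rw [hn]
  refine (rank_map_mkQ_derived_le b Sigma.fst 𝔥 hdec hbr hperf (hdec.collectedBasis_mem _)
    hn.le).trans ?_
  have : 4 * m * D * d + N ^ 2 * (N ^ 2 * (n + n)) ≤ (4 * m * d + 2 * N ^ 4) * (n + D) :=
    (Nat.le_add_right _ (4 * m * d * n + 2 * N ^ 4 * D)).trans_eq (by ring)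
  exact_mod_cast this
end

section
/- Let 𝔤 be a Lie algebra over a field F, and let 𝔤₀ and 𝔤₁ be F-subspaces of 𝔤 such that 𝔤₁ is finite-dimensional of dimension d and the subspace B = span_F{⁅x,y⁆ : x ∈ 𝔤₀, y ∈ 𝔤₁} is finite-dimensional. Let D be a natural number, and let U be a subspace of 𝔤₀^D of finite codimension in 𝔤₀^D and V a subspace of 𝔤₁^D of finite codimension in 𝔤₁^D. Let [U,V] = span_F{⁅u,v⁆ : u ∈ U, v ∈ V}, computed componentwise in 𝔤^D; then [U,V] ⊆ B^D and codim_{B^D}[U,V] ≤ d · codim_{𝔤₀^D}U + (dim_F B) · codim_{𝔤₁^D}V. -/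
/-!
Only the bilinearity of the bracket matters. Let `Ξ` be a complement of `U` in `𝔤₀ᴰ`, so
`dim Ξ = codim U`. Extracting a basis of `𝔤₁ᴰ / V` from the images of the coordinate copies
`𝔤₁ e_k` gives a set `K` of at most `codim V` coordinates with `𝔤₁ᴰ = V + ∑_{k ∈ K} 𝔤₁ e_k`.
Since `⁅x, y⁆ e_k = ⁅x e_k, (y, …, y)⁆` and `x e_k ∈ U + Ξ`, every generator of `Bᴰ` lies in
`[U, 𝔤₁ᴰ] + [Ξ, Δ𝔤₁] ⊆ [U, V] + ∑_{k ∈ K} B e_k + [Ξ, Δ𝔤₁]`, where `Δ𝔤₁` consists of the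
constant tuples; the last two summands have dimension at most `|K| · dim B` and
`dim Ξ · dim 𝔤₁`.
-/

open Set

namespace Submodule

variable {F E : Type*} [Field F] [AddCommGroup E] [Module F E]

theorem rank_quotient_comap_subtype_eq_rank_map_mkQ (N P : Submodule F E) :
    Module.rank F (P ⧸ N.comap P.subtype) = Module.rank F (P.map N.mkQ) := by
  have hker : LinearMap.ker (N.mkQ ∘ₗ P.subtype) = N.comap P.subtype := by
    rw [LinearMap.ker_comp, ker_mkQ]
  have hrange : LinearMap.range (N.mkQ ∘ₗ P.subtype) = P.map N.mkQ := by
    rw [LinearMap.range_comp, range_subtype]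
  rw [← hker, ← hrange]
  exact (N.mkQ ∘ₗ P.subtype).quotKerEquivRange.rank_eq

theorem rank_quotient_comap_subtype_le_of_le_sup {N P X : Submodule F E} (h : P ≤ N ⊔ X) :
    Module.rank F (P ⧸ N.comap P.subtype) ≤ Module.rank F X := by
  rw [rank_quotient_comap_subtype_eq_rank_map_mkQ]
  have hmap : P.map N.mkQ ≤ X.map N.mkQ := by
    simpa only [map_sup, mkQ_map_self, bot_sup_eq] using map_mono (f := N.mkQ) h
  exact (rank_mono hmap).trans (rank_map_le _ _)

theorem exists_le_sup_rank_le_rank_quotient (N P : Submodule F E) :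
    ∃ X : Submodule F E, P ≤ N ⊔ X ∧
      Module.rank F X ≤ Module.rank F (P ⧸ N.comap P.subtype) := by
  obtain ⟨C, hC⟩ := (N.comap P.subtype).exists_isCompl
  refine ⟨C.map P.subtype, fun x hx => ?_, ?_⟩
  · obtain ⟨n, hn, c, hc, hsum⟩ := mem_sup.1 (hC.sup_eq_top ▸ mem_top (x := (⟨x, hx⟩ : P)))
    exact mem_sup.2 ⟨n, hn, c, mem_map_of_mem hc, congrArg Subtype.val hsum⟩
  · exact (rank_map_le _ _).trans_eq (quotientEquivOfIsCompl _ _ hC).rank_eq.symm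

theorem exists_finset_card_le_rank_biSup_eq_iSup {ι : Type*} [Finite ι]
    (q : ι → Submodule F E) :
    ∃ K : Finset ι, (K.card : Cardinal) ≤ Module.rank F ↥(⨆ i, q i) ∧
      ⨆ i ∈ K, q i = ⨆ i, q i := by
  classical
  obtain ⟨b, hbs, hspan, hli⟩ := exists_linearIndependent F (⋃ i, (q i : Set E))
  choose k hk using fun x : b => mem_iUnion.1 (hbs x.2)
  have : Fintype (range k) := Fintype.ofFinite _
  refine ⟨(range k).toFinset, ?_, le_antisymm (iSup₂_le fun i _ => le_iSup q i) ?_⟩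
  · rw [iSup_eq_span, ← hspan, rank_span_set hli, toFinset_card]
    simpa using Cardinal.mk_range_le_lift (f := k)
  · rw [iSup_eq_span, ← hspan, span_le]
    exact fun x hx => mem_iSup_of_mem (k ⟨x, hx⟩) (mem_iSup_of_mem (by simp) (hk ⟨x, hx⟩))

theorem exists_finset_card_le_rank_quotient_le_sup_biSup {ι : Type*} [Finite ι]
    (N P : Submodule F E) (p : ι → Submodule F E) (hP : ⨆ i, p i = P) :
    ∃ K : Finset ι, (K.card : Cardinal) ≤ Module.rank F (P ⧸ N.comap P.subtype) ∧
      P ≤ N ⊔ ⨆ i ∈ K, p i := by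
  subst hP
  obtain ⟨K, hcard, hK⟩ := exists_finset_card_le_rank_biSup_eq_iSup fun i => (p i).map N.mkQ
  rw [← map_iSup] at hcard hK
  simp only [← map_iSup] at hK
  refine ⟨K, hcard.trans_eq (rank_quotient_comap_subtype_eq_rank_map_mkQ N _).symm, ?_⟩
  rw [← comap_map_mkQ, hK]
  exact le_comap_map _ _

theorem rank_biSup_le {ι : Type*} (K : Finset ι) (p : ι → Submodule F E) :
    Module.rank F ↥(⨆ i ∈ K, p i) ≤ ∑ i ∈ K, Module.rank F (p i) := by
  classical
  induction K using Finset.induction_on with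
  | empty => simp
  | insert i K hi ih =>
    rw [Finset.iSup_insert, Finset.sum_insert hi]
    exact (rank_add_le_rank_add_rank _ _).trans (by gcongr)

universe u in
theorem rank_map₂_le {M N P : Type u} [AddCommGroup M] [Module F M] [AddCommGroup N]
    [Module F N] [AddCommGroup P] [Module F P] (f : M →ₗ[F] N →ₗ[F] P) (p : Submodule F M)
    (q : Submodule F N) :
    Module.rank F (map₂ f p q) ≤ Module.rank F p * Module.rank F q := by
  rw [TensorProduct.map₂_eq_range_lift_comp_mapIncl, ← rank_tensorProduct']
  exact rank_range_le _

end Submodule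

namespace LinearMap

variable {R M N P : Type*} [CommSemiring R] [AddCommMonoid M] [Module R M] [AddCommMonoid N]
  [Module R N] [AddCommMonoid P] [Module R P]

def compLeft₂ (f : M →ₗ[R] N →ₗ[R] P) (ι : Type*) : (ι → M) →ₗ[R] (ι → N) →ₗ[R] ι → P :=
  mk₂ R (fun u v i => f (u i) (v i)) (fun _ _ _ => by ext; simp) (fun _ _ _ => by ext; simp)
    (fun _ _ _ => by ext; simp) (fun _ _ _ => by ext; simp)

@[simp]
theorem compLeft₂_apply (f : M →ₗ[R] N →ₗ[R] P) {ι : Type*} (u : ι → M) (v : ι → N) (i : ι) :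
    f.compLeft₂ ι u v i = f (u i) (v i) :=
  rfl

end LinearMap

namespace Submodule

section Componentwise

variable {R M N P ι : Type*} [CommSemiring R] [AddCommMonoid M] [Module R M] [AddCommMonoid N]
  [Module R N] [AddCommMonoid P] [Module R P] (f : M →ₗ[R] N →ₗ[R] P)
  (M₀ : Submodule R M) (N₁ : Submodule R N)

theorem span_setOf_eq_apply_eq_map₂ (p : Submodule R M) (q : Submodule R N) :
    span R {z | ∃ x ∈ p, ∃ y ∈ q, z = f x y} = map₂ f p q := by
  rw [map₂_eq_span_image2]
  congr 1
  ext z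
  simp only [mem_ofPred_eq, mem_image2, SetLike.mem_coe, @eq_comm _ z]

theorem map₂_compLeft₂_le_pi {U : Submodule R (ι → M)} {V : Submodule R (ι → N)}
    (hU : U ≤ pi univ fun _ => M₀) (hV : V ≤ pi univ fun _ => N₁) :
    map₂ (f.compLeft₂ ι) U V ≤ pi univ fun _ => map₂ f M₀ N₁ :=
  map₂_le.2 fun _ hu _ hv i _ => apply_mem_map₂ f (hU hu i trivial) (hV hv i trivial)

theorem pi_map₂_le_map₂_compLeft₂_const [DecidableEq ι] [Finite ι] :
    (pi univ fun _ => map₂ f M₀ N₁) ≤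
      map₂ (f.compLeft₂ ι) (pi univ fun _ => M₀) (N₁.map LinearMap.const) := by
  rw [← iSup_map_single]
  refine iSup_le fun i => map_le_iff_le_comap.2 <| map₂_le.2 fun x hx y hy => ?_
  have hsingle : Pi.single i (f x y) = f.compLeft₂ ι (Pi.single i x) (Function.const ι y) := by
    ext j
    rcases eq_or_ne j i with rfl | h <;> simp [*]
  rw [mem_comap, LinearMap.coe_single, hsingle]
  exact apply_mem_map₂ _ (le_comap_single_pi _ hx) (mem_map_of_mem hy)

theorem map₂_compLeft₂_map_single_le [DecidableEq ι] {U : Submodule R (ι → M)}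
    (hU : U ≤ pi univ fun _ => M₀) (k : ι) :
    map₂ (f.compLeft₂ ι) U (N₁.map (LinearMap.single R (fun _ => N) k)) ≤
      (map₂ f M₀ N₁).map (LinearMap.single R (fun _ => P) k) := by
  refine map₂_le.2 fun u hu _ ⟨y, hy, hv⟩ =>
    ⟨f (u k) y, apply_mem_map₂ f (hU hu k trivial) hy, ?_⟩
  subst hv
  ext j
  rcases eq_or_ne j k with rfl | h <;> simp [*]

theorem pi_map₂_le_sup_map₂_compLeft₂ [DecidableEq ι] [Finite ι] {U Ξ : Submodule R (ι → M)}
    {V : Submodule R (ι → N)} {K : Finset ι} (hU : U ≤ pi univ fun _ => M₀)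
    (hΞ : (pi univ fun _ => M₀) ≤ U ⊔ Ξ)
    (hK : (pi univ fun _ => N₁) ≤ V ⊔ ⨆ k ∈ K, N₁.map (LinearMap.single R (fun _ => N) k)) :
    (pi univ fun _ => map₂ f M₀ N₁) ≤
      map₂ (f.compLeft₂ ι) U V ⊔ (map₂ (f.compLeft₂ ι) Ξ (N₁.map LinearMap.const) ⊔
        ⨆ k ∈ K, (map₂ f M₀ N₁).map (LinearMap.single R (fun _ => P) k)) := by
  have hconst : N₁.map LinearMap.const ≤ pi univ fun _ : ι => N₁ := by
    rintro _ ⟨y, hy, rfl⟩ i -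
    exact hy
  have hUN₁ : map₂ (f.compLeft₂ ι) U (pi univ fun _ => N₁) ≤ map₂ (f.compLeft₂ ι) U V ⊔
      ⨆ k ∈ K, (map₂ f M₀ N₁).map (LinearMap.single R (fun _ => P) k) := by
    refine (map₂_le_map₂_right hK).trans ?_
    simp only [map₂_sup_right, map₂_iSup_right]
    exact sup_le_sup_left (iSup₂_mono fun k _ => map₂_compLeft₂_map_single_le f M₀ N₁ hU k) _
  calc (pi univ fun _ => map₂ f M₀ N₁)
      ≤ map₂ (f.compLeft₂ ι) (pi univ fun _ => M₀) (N₁.map LinearMap.const) :=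
        pi_map₂_le_map₂_compLeft₂_const f M₀ N₁
    _ ≤ map₂ (f.compLeft₂ ι) U (N₁.map LinearMap.const) ⊔
          map₂ (f.compLeft₂ ι) Ξ (N₁.map LinearMap.const) := by
        rw [← map₂_sup_left]
        exact map₂_le_map₂_left hΞ
    _ ≤ _ := by
        refine sup_le ((map₂_le_map₂_right hconst).trans (hUN₁.trans ?_)) ?_
        · exact sup_le_sup_left le_sup_right _
        · exact le_sup_of_le_right le_sup_left

end Componentwise

universe u in
theorem rank_quotient_map₂_compLeft₂_le {F : Type*} {ι : Type} [Field F] [Finite ι]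
    {M N P : Type u} [AddCommGroup M] [Module F M] [AddCommGroup N] [Module F N]
    [AddCommGroup P] [Module F P] (f : M →ₗ[F] N →ₗ[F] P) (M₀ : Submodule F M)
    (N₁ : Submodule F N) {U : Submodule F (ι → M)} (V : Submodule F (ι → N))
    (hU : U ≤ pi univ fun _ => M₀) :
    Module.rank F ((pi univ fun _ => map₂ f M₀ N₁) ⧸
        (map₂ (f.compLeft₂ ι) U V).comap (pi univ fun _ => map₂ f M₀ N₁).subtype) ≤
      Module.rank F N₁ * Module.rank F ((pi univ fun _ => M₀) ⧸
          U.comap (pi univ fun _ => M₀).subtype) +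
        Module.rank F (map₂ f M₀ N₁) * Module.rank F ((pi univ fun _ => N₁) ⧸
          V.comap (pi univ fun _ => N₁).subtype) := by
  classical
  obtain ⟨Ξ, hΞ, hΞrank⟩ := exists_le_sup_rank_le_rank_quotient U (pi univ fun _ => M₀)
  obtain ⟨K, hKcard, hK⟩ := exists_finset_card_le_rank_quotient_le_sup_biSup V _ _
    (iSup_map_single (φ := fun _ : ι => N) (p := fun _ => N₁))
  refine (rank_quotient_comap_subtype_le_of_le_sup
    (pi_map₂_le_sup_map₂_compLeft₂ f M₀ N₁ hU hΞ hK)).trans ?_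
  have hΞpart : Module.rank F (map₂ (f.compLeft₂ ι) Ξ (N₁.map LinearMap.const)) ≤
      Module.rank F N₁ * Module.rank F ((pi univ fun _ => M₀) ⧸
          U.comap (pi univ fun _ => M₀).subtype) := by
    rw [mul_comm]
    exact (rank_map₂_le _ _ _).trans (mul_le_mul' hΞrank (rank_map_le _ _))
  have hKpart :
      Module.rank F ↥(⨆ k ∈ K, (map₂ f M₀ N₁).map (LinearMap.single F (fun _ => P) k)) ≤
        Module.rank F (map₂ f M₀ N₁) * Module.rank F ((pi univ fun _ => N₁) ⧸
          V.comap (pi univ fun _ => N₁).subtype) := by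
    refine (rank_biSup_le _ _).trans ?_
    calc ∑ k ∈ K, Module.rank F ↥((map₂ f M₀ N₁).map (LinearMap.single F (fun _ => P) k))
        ≤ ∑ _k ∈ K, Module.rank F (map₂ f M₀ N₁) :=
          Finset.sum_le_sum fun _ _ => rank_map_le _ _
      _ ≤ _ := by
        rw [Finset.sum_const, nsmul_eq_mul, mul_comm]
        exact mul_le_mul_right hKcard _
  exact (rank_add_le_rank_add_rank _ _).trans (add_le_add hΞpart hKpart)

end Submodule

open Submodule in
theorem stmt_1_general (F : Type*) [Field F] (g : Type*) [LieRing g] [LieAlgebra F g]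
    (g0 g1 : Submodule F g)
    (D : ℕ) (U V : Submodule F (Fin D → g)) :
    let B : Submodule F g := Submodule.span F {z : g | ∃ x ∈ g0, ∃ y ∈ g1, z = ⁅x, y⁆}
    let g0D : Submodule F (Fin D → g) := Submodule.pi Set.univ fun _ => g0
    let g1D : Submodule F (Fin D → g) := Submodule.pi Set.univ fun _ => g1
    let BD : Submodule F (Fin D → g) := Submodule.pi Set.univ fun _ => B
    let UV : Submodule F (Fin D → g) :=
      Submodule.span F {z : Fin D → g | ∃ u ∈ U, ∃ v ∈ V, z = fun i => ⁅u i, v i⁆}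
    Module.rank F ↥B < Cardinal.aleph0 →
    U ≤ g0D → V ≤ g1D →
    Module.rank F (↥g0D ⧸ U.comap g0D.subtype) < Cardinal.aleph0 →
    Module.rank F (↥g1D ⧸ V.comap g1D.subtype) < Cardinal.aleph0 →
    UV ≤ BD ∧
      Module.rank F (↥BD ⧸ UV.comap BD.subtype) ≤
        Module.rank F ↥g1 * Module.rank F (↥g0D ⧸ U.comap g0D.subtype) +
          Module.rank F ↥B * Module.rank F (↥g1D ⧸ V.comap g1D.subtype) := by
  let β : g →ₗ[F] g →ₗ[F] g := LinearMap.mk₂ F (⁅·, ·⁆) add_lie smul_lie lie_add lie_smul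
  have hB : span F {z : g | ∃ x ∈ g0, ∃ y ∈ g1, z = ⁅x, y⁆} = map₂ β g0 g1 :=
    span_setOf_eq_apply_eq_map₂ β g0 g1
  have hUV : span F {z : Fin D → g | ∃ u ∈ U, ∃ v ∈ V, z = fun i => ⁅u i, v i⁆} =
      map₂ (β.compLeft₂ (Fin D)) U V :=
    span_setOf_eq_apply_eq_map₂ (β.compLeft₂ (Fin D)) U V
  rw [hB, hUV]
  intro _ _ _ _ _ _ hU hV _ _
  exact ⟨map₂_compLeft₂_le_pi β g0 g1 hU hV, rank_quotient_map₂_compLeft₂_le β g0 g1 V hU⟩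

/-- Let `𝔤` be a Lie algebra over a field `F`, `𝔤₀, 𝔤₁ ≤ 𝔤` subspaces with `𝔤₁`
finite-dimensional and `B = span {⁅x, y⁆ : x ∈ 𝔤₀, y ∈ 𝔤₁}` finite-dimensional.  For
subspaces `U ≤ 𝔤₀ᴰ` and `V ≤ 𝔤₁ᴰ` of finite codimension, the span `[U, V]` of componentwise
brackets satisfies `[U, V] ≤ Bᴰ` and
`codim_{Bᴰ} [U, V] ≤ (dim 𝔤₁) · codim_{𝔤₀ᴰ} U + (dim B) · codim_{𝔤₁ᴰ} V`. -/
theorem stmt_1 (F : Type*) [Field F] (g : Type*) [LieRing g] [LieAlgebra F g]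
    (g0 g1 : Submodule F g)
    (hg1fin : Module.rank F ↥g1 < Cardinal.aleph0)
    (D : ℕ) (U V : Submodule F (Fin D → g)) :
    let B : Submodule F g := Submodule.span F {z : g | ∃ x ∈ g0, ∃ y ∈ g1, z = ⁅x, y⁆}
    let g0D : Submodule F (Fin D → g) := Submodule.pi Set.univ fun _ => g0
    let g1D : Submodule F (Fin D → g) := Submodule.pi Set.univ fun _ => g1
    let BD : Submodule F (Fin D → g) := Submodule.pi Set.univ fun _ => B
    let UV : Submodule F (Fin D → g) :=
      Submodule.span F {z : Fin D → g | ∃ u ∈ U, ∃ v ∈ V, z = fun i => ⁅u i, v i⁆}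
    Module.rank F ↥B < Cardinal.aleph0 →
    U ≤ g0D → V ≤ g1D →
    Module.rank F (↥g0D ⧸ U.comap g0D.subtype) < Cardinal.aleph0 →
    Module.rank F (↥g1D ⧸ V.comap g1D.subtype) < Cardinal.aleph0 →
    UV ≤ BD ∧
      Module.rank F (↥BD ⧸ UV.comap BD.subtype) ≤
        Module.rank F ↥g1 * Module.rank F (↥g0D ⧸ U.comap g0D.subtype) +
          Module.rank F ↥B * Module.rank F (↥g1D ⧸ V.comap g1D.subtype) :=
  stmt_1_general F g g0 g1 D U V
end

section
/- Let P be a perfect group (i.e. P equals its commutator subgroup) and Q an arbitrary group. Let H be a subnormal subgroup of P × Q, i.e. there is a finite chain of subgroups H = N_s ⊴ N_{s−1} ⊴ ⋯ ⊴ N_1 ⊴ N_0 = P × Q in which each term is normal in the next one. If the projection of H to the first factor P is all of P, then P × {1} is contained in H. -/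
/-!
Walk down the subnormal series `P × Q = N 0 ⊵ N 1 ⊵ ⋯ ⊵ N s = H`, showing `P × 1 ≤ N i` for
every `i`. If `P × 1 ≤ N i` and `N (i + 1) ⊴ N i` projects onto `P` (it contains `H`), then for
`a, b : P` pick `x ∈ N (i + 1)` over `b`: the commutator `⁅(a, 1), x⁆ = (⁅a, b⁆, 1)` lies in
`N (i + 1)`. So `N (i + 1)` contains `[P, P] × 1 = P × 1`.
-/

open scoped commutatorElement

section

variable {P Q : Type*} [Group P] [Group Q]

theorem Prod.commutatorElement_inl (a : P) (x : P × Q) :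
    ⁅((a, 1) : P × Q), x⁆ = (⁅a, x.1⁆, 1) := by
  ext <;> simp [commutatorElement_def]

theorem commutator_le_comap_inl_of_conj_mem {K L : Subgroup (P × Q)}
    (hKL : ∀ g ∈ L, ∀ x ∈ K, g * x * g⁻¹ ∈ K) (hL : ∀ p : P, ((p, 1) : P × Q) ∈ L)
    (hK : K.map (MonoidHom.fst P Q) = ⊤) :
    commutator P ≤ K.comap (MonoidHom.inl P Q) := by
  rw [commutator_def, Subgroup.commutator_le]
  intro a _ b _
  obtain ⟨x, hx, rfl⟩ : b ∈ K.map (MonoidHom.fst P Q) := hK ▸ Subgroup.mem_top b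
  have hcomm : ⁅((a, 1) : P × Q), x⁆ ∈ K := mul_mem (hKL _ (hL a) x hx) (inv_mem hx)
  simpa [Prod.commutatorElement_inl] using hcomm

end

/-- Let `P` be a perfect group and `Q` an arbitrary group. If `H` is a subnormal subgroup of
`P × Q` (witnessed by a finite chain `H = N s ⊴ ⋯ ⊴ N 0 = P × Q`) whose projection to the
first factor is all of `P`, then `P × {1}` is contained in `H`. -/
theorem stmt_2 (P Q : Type*) [Group P] [Group Q]
    (hP : commutator P = ⊤)
    (H : Subgroup (P × Q))
    (hsub : ∃ (s : ℕ) (N : ℕ → Subgroup (P × Q)),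
      N 0 = ⊤ ∧ N s = H ∧
      ∀ i < s, N (i + 1) ≤ N i ∧
        ∀ g ∈ N i, ∀ x ∈ N (i + 1), g * x * g⁻¹ ∈ N (i + 1))
    (hproj : H.map (MonoidHom.fst P Q) = ⊤) :
    ∀ p : P, ((p, 1) : P × Q) ∈ H := by
  obtain ⟨s, N, h0, rfl, hchain⟩ := hsub
  have hH_le : ∀ i ≤ s, N s ≤ N i := fun i hi =>
    Nat.decreasingInduction (motive := fun i _ => N s ≤ N i)
      (fun k hk ih => ih.trans (hchain k hk).1) le_rfl hi
  have hinl : ∀ i ≤ s, ∀ p : P, ((p, 1) : P × Q) ∈ N i := by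
    intro i
    induction i with
    | zero => simp [h0]
    | succ i ih =>
      intro hi p
      have hproj_i : (N (i + 1)).map (MonoidHom.fst P Q) = ⊤ :=
        top_le_iff.mp (hproj ▸ Subgroup.map_mono (hH_le (i + 1) hi))
      exact commutator_le_comap_inl_of_conj_mem (hchain i hi).2 (ih (Nat.le_of_succ_le hi))
        hproj_i (hP ▸ Subgroup.mem_top p)
  exact hinl s le_rfl
end

section
/- Let F be a field, M a finite-dimensional F-vector space of dimension d, D a natural number, and V a subspace of M^D (the space of D-tuples with entries in M) of finite codimension. Then there exist elements v₁, …, v_d ∈ V such that the number of indices i ∈ {1,…,D} for which the vectors v₁(i), …, v_d(i) do not span M is at most codim_{M^D} V. -/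
/-!
Induct on `D`, projecting `V` away from coordinate `0` to `W ⊆ M ^ (D - 1)` and lifting the
vectors obtained for `W`. If every vector supported at coordinate `0` lies in `V`, the lifts can
be corrected so that their `0`-th coordinates form a spanning family. Otherwise the projection
`M ^ D ⧸ V → M ^ (D - 1) ⧸ W` has a nonzero kernel, so `codim W < codim V`, which pays for
coordinate `0` being possibly bad.
-/

open Module Submodule Set

namespace Submodule

theorem mapQ_map_surjective {R E G : Type*} [Ring R] [AddCommGroup E] [Module R E]
    [AddCommGroup G] [Module R G] {f : E →ₗ[R] G} (hf : Function.Surjective f)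
    (V : Submodule R E) : Function.Surjective (V.mapQ (V.map f) f (le_comap_map f V)) := by
  rintro ⟨y⟩
  obtain ⟨x, rfl⟩ := hf y
  exact ⟨Quotient.mk x, rfl⟩

variable {K E G : Type*} [Field K] [AddCommGroup E] [Module K E] [AddCommGroup G] [Module K G]
  [FiniteDimensional K E] {f : E →ₗ[K] G}

theorem finrank_quotient_map_le (hf : Function.Surjective f) (V : Submodule K E) :
    finrank K (G ⧸ V.map f) ≤ finrank K (E ⧸ V) :=
  LinearMap.finrank_le_finrank_of_surjective (mapQ_map_surjective hf V)

theorem finrank_quotient_map_lt (hf : Function.Surjective f) {V : Submodule K E}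
    (hV : ¬ LinearMap.ker f ≤ V) : finrank K (G ⧸ V.map f) < finrank K (E ⧸ V) := by
  set g := V.mapQ (V.map f) f (le_comap_map f V)
  obtain ⟨x, hxf, hxV⟩ := SetLike.not_le_iff_exists.mp hV
  have hker : LinearMap.ker g ≠ ⊥ := by
    have hx : Quotient.mk x ≠ (0 : E ⧸ V) := by simpa [Quotient.mk_eq_zero] using hxV
    refine (Submodule.ne_bot_iff _).mpr ⟨Quotient.mk x, ?_, hx⟩
    simp [g, LinearMap.mem_ker.mp hxf]
  have hrange : LinearMap.range g = ⊤ := LinearMap.range_eq_top.mpr (mapQ_map_surjective hf V)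
  have hrank := g.finrank_range_add_finrank_ker
  rw [hrange, finrank_top] at hrank
  have hpos := one_le_finrank_iff.mpr hker
  omega

end Submodule

theorem Fin.ncard_setOf_succ {n : ℕ} (p : Fin (n + 1) → Prop) [DecidablePred p] :
    {i | p i}.ncard = (if p 0 then 1 else 0) + {i : Fin n | p i.succ}.ncard := by
  simp only [Set.ncard_eq_toFinset_card', Set.toFinset_ofPred]
  exact Fin.card_filter_univ_succ' p

section

variable (F : Type*) {M : Type*} [Field F] [AddCommGroup M] [Module F M]

def nonSpanningCoords {κ ι : Type*} (v : κ → ι → M) : Set ι :=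
  {i | span F (range fun j => v j i) ≠ ⊤}

variable {F}

open Classical in
theorem ncard_nonSpanningCoords_fin_succ {κ : Type*} {n : ℕ} (v : κ → Fin (n + 1) → M) :
    (nonSpanningCoords F v).ncard =
      (if span F (range fun j => v j 0) ≠ ⊤ then 1 else 0) +
        (nonSpanningCoords F fun j => v j ∘ Fin.succ).ncard :=
  Fin.ncard_setOf_succ _

variable [FiniteDimensional F M]

theorem exists_mem_ncard_nonSpanningCoords_le_of_map_funLeft_succ {κ : Type*} {n : ℕ}
    {b : κ → M} (hb : span F (range b) = ⊤) (V : Submodule F (Fin (n + 1) → M))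
    {v' : κ → Fin n → M} (hv' : ∀ j, v' j ∈ V.map (LinearMap.funLeft F M Fin.succ))
    (hcard : (nonSpanningCoords F v').ncard ≤
      finrank F ((Fin n → M) ⧸ V.map (LinearMap.funLeft F M Fin.succ))) :
    ∃ v : κ → Fin (n + 1) → M, (∀ j, v j ∈ V) ∧
      (nonSpanningCoords F v).ncard ≤ finrank F ((Fin (n + 1) → M) ⧸ V) := by
  set π := LinearMap.funLeft F M (Fin.succ : Fin n → Fin (n + 1))
  have hπ : Function.Surjective π :=
    LinearMap.funLeft_surjective_of_injective _ _ _ (Fin.succ_injective n)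
  choose u hu hπu using fun j => mem_map.mp (hv' j)
  have hcodim := finrank_quotient_map_le hπ V
  by_cases hker : LinearMap.ker π ≤ V
  · set v : κ → Fin (n + 1) → M := fun j => Fin.cons (b j) (v' j)
    have hπv : ∀ j, π (v j) = v' j := fun j => rfl
    refine ⟨v, fun j => ?_, ?_⟩
    · have : v j - u j ∈ V := hker (by rw [LinearMap.mem_ker, map_sub, hπv, hπu, sub_self])
      simpa using add_mem (hu j) this
    · rw [ncard_nonSpanningCoords_fin_succ, show (fun j => v j ∘ Fin.succ) = v' from rfl]
      simp only [v, Fin.cons_zero, hb, ne_eq, not_true_eq_false, if_false, zero_add]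
      exact hcard.trans hcodim
  · refine ⟨u, hu, ?_⟩
    have hlt := finrank_quotient_map_lt hπ hker
    have hu' : (fun j => u j ∘ Fin.succ) = v' := funext hπu
    rw [ncard_nonSpanningCoords_fin_succ, hu']
    split_ifs <;> omega

theorem exists_mem_ncard_nonSpanningCoords_le_finrank_quotient {κ : Type*} {b : κ → M}
    (hb : span F (range b) = ⊤) {D : ℕ} (V : Submodule F (Fin D → M)) :
    ∃ v : κ → Fin D → M, (∀ j, v j ∈ V) ∧
      (nonSpanningCoords F v).ncard ≤ finrank F ((Fin D → M) ⧸ V) := by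
  induction D with
  | zero => exact ⟨0, fun _ => V.zero_mem, by simp [Set.eq_empty_of_isEmpty]⟩
  | succ n ih =>
    obtain ⟨v', hv', hcard⟩ := ih (V.map (LinearMap.funLeft F M Fin.succ))
    exact exists_mem_ncard_nonSpanningCoords_le_of_map_funLeft_succ hb V hv' hcard

end

/-- Let `F` be a field, `M` a finite-dimensional `F`-vector space of dimension `d`, `D` a
natural number, and `V` a subspace of `M ^ D` (of finite codimension, which is automatic
here since `M ^ D` is finite-dimensional). Then there exist `v₁, …, v_d ∈ V` such that the
number of indices `i` for which `v₁ i, …, v_d i` do not span `M` is at most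
`codim_{M ^ D} V`. -/
theorem stmt_8 (F : Type*) [Field F] (M : Type*) [AddCommGroup M] [Module F M]
    [FiniteDimensional F M] (D : ℕ) (V : Submodule F (Fin D → M)) :
    ∃ v : Fin (Module.finrank F M) → (Fin D → M),
      (∀ j, v j ∈ V) ∧
      {i : Fin D | Submodule.span F (Set.range fun j => v j i) ≠ ⊤}.ncard ≤
        Module.finrank F ((Fin D → M) ⧸ V) :=
  exists_mem_ncard_nonSpanningCoords_le_finrank_quotient (finBasis F M).span_eq V
end
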